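/- arXiv:1310.5774 — 4 statements merged into one kernel-verified Lean document; each statement's English description precedes it below -/
import Mathlib

section
/- Let R be a commutative graded ring with R_0 = ℤ that has good divisibility up to degree r, meaning: whenever x ∈ R_i, y ∈ R_j, i + j ≤ r, and xy = 0, then x = 0 or y = 0. Suppose c_1, …, c_k and c̃_1, …, c̃_{r-k} are elements with c_i ∈ R_i and c̃_j ∈ R_j (for some 0 ≤ k ≤ r) satisfying the Whitney-type relation (1 + c_1 + ⋯ + c_k)·(1 + c̃_1 + ⋯ + c̃_{r-k}) = 1 in R. Then c_i = 0 for all i and c̃_j = 0 for all j. -/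
/-- Let `R` be a commutative graded ring with degree-zero part `ℤ`
(every element of `𝒜 0` is an integer multiple of `1`) having good divisibility up to
degree `r`. If `c_i ∈ R_i` (`1 ≤ i ≤ k`) and `c̃_j ∈ R_j` (`1 ≤ j ≤ r - k`) satisfy the
Whitney-type relation `(1 + c_1 + ⋯ + c_k) * (1 + c̃_1 + ⋯ + c̃_{r-k}) = 1`,
then all `c_i = 0` and all `c̃_j = 0`. -/
theorem stmt_5 {R : Type} [CommRing R] (𝒜 : ℕ → Submodule ℤ R) [GradedRing 𝒜]
    (h0 : ∀ x ∈ 𝒜 0, ∃ n : ℤ, x = n • (1 : R))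
    (r : ℕ)
    (hgood : ∀ (i j : ℕ) (x y : R), x ∈ 𝒜 i → y ∈ 𝒜 j → i + j ≤ r → x * y = 0 →
      x = 0 ∨ y = 0)
    (k : ℕ) (hk : k ≤ r)
    (c ctilde : ℕ → R)
    (hc : ∀ i, c i ∈ 𝒜 i) (hct : ∀ j, ctilde j ∈ 𝒜 j)
    (hWhitney :
      (1 + ∑ i ∈ Finset.Icc 1 k, c i) * (1 + ∑ j ∈ Finset.Icc 1 (r - k), ctilde j) = 1) :
    (∀ i ∈ Finset.Icc 1 k, c i = 0) ∧ (∀ j ∈ Finset.Icc 1 (r - k), ctilde j = 0) := by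
  classical
  have E : (∑ i ∈ Finset.Icc 1 k, c i) + (∑ j ∈ Finset.Icc 1 (r - k), ctilde j) +
      ∑ i ∈ Finset.Icc 1 k, ∑ j ∈ Finset.Icc 1 (r - k), c i * ctilde j = 0 := by
    rw [← Finset.sum_mul_sum]
    linear_combination hWhitney
  have projmem : ∀ (d n : ℕ) (x : R), x ∈ 𝒜 n →
      GradedRing.proj 𝒜 d x = if n = d then x else 0 := by
    intro d n x hx
    rw [GradedRing.proj_apply]
    split
    next h => subst h; exact DirectSum.decompose_of_mem_same 𝒜 hx
    next h => exact DirectSum.decompose_of_mem_ne 𝒜 hx h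
  have key : ∀ d : ℕ, 1 ≤ d →
      (if d ≤ k then c d else 0) + (if d ≤ r - k then ctilde d else 0) +
        ∑ i ∈ Finset.Icc 1 k, ∑ j ∈ Finset.Icc 1 (r - k),
          (if i + j = d then c i * ctilde j else 0) = 0 := by
    intro d hd
    have h := congrArg (GradedRing.proj 𝒜 d) E
    rw [map_zero, map_add, map_add, map_sum, map_sum, map_sum] at h
    have h1 : ∑ i ∈ Finset.Icc 1 k, GradedRing.proj 𝒜 d (c i)
        = if d ≤ k then c d else 0 := by
      rw [Finset.sum_congr rfl (fun i _ => projmem d i (c i) (hc i)),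
        Finset.sum_ite_eq' (Finset.Icc 1 k) d c]
      simp [Finset.mem_Icc, hd]
    have h2 : ∑ j ∈ Finset.Icc 1 (r - k), GradedRing.proj 𝒜 d (ctilde j)
        = if d ≤ r - k then ctilde d else 0 := by
      rw [Finset.sum_congr rfl (fun j _ => projmem d j (ctilde j) (hct j)),
        Finset.sum_ite_eq' (Finset.Icc 1 (r - k)) d ctilde]
      simp [Finset.mem_Icc, hd]
    have h3 : ∑ i ∈ Finset.Icc 1 k,
        GradedRing.proj 𝒜 d (∑ j ∈ Finset.Icc 1 (r - k), c i * ctilde j)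
        = ∑ i ∈ Finset.Icc 1 k, ∑ j ∈ Finset.Icc 1 (r - k),
          (if i + j = d then c i * ctilde j else 0) := by
      refine Finset.sum_congr rfl fun i _ => ?_
      rw [map_sum]
      exact Finset.sum_congr rfl fun j _ =>
        projmem d (i + j) _ (SetLike.mul_mem_graded (hc i) (hct j))
    rw [h1, h2, h3] at h
    exact h
  have hA : ∀ i ∈ Finset.Icc 1 k, c i = 0 := by
    by_contra hcon
    push_neg at hcon
    obtain ⟨p0, hp0mem, hp0⟩ := hcon
    obtain ⟨hp01, hp0k⟩ := Finset.mem_Icc.mp hp0mem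
    by_cases hB : ∀ j ∈ Finset.Icc 1 (r - k), ctilde j = 0
    · have hk' := key p0 hp01
      rw [if_pos hp0k] at hk'
      have h2 : (if p0 ≤ r - k then ctilde p0 else 0) = 0 := by
        split
        next h => exact hB p0 (Finset.mem_Icc.mpr ⟨hp01, h⟩)
        next => rfl
      have h3 : ∑ i ∈ Finset.Icc 1 k, ∑ j ∈ Finset.Icc 1 (r - k),
          (if i + j = p0 then c i * ctilde j else 0) = 0 := by
        refine Finset.sum_eq_zero fun i _ => Finset.sum_eq_zero fun j hj => ?_
        rw [hB j hj, mul_zero, ite_self]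
      rw [h2, h3, add_zero, add_zero] at hk'
      exact hp0 hk'
    · push_neg at hB
      obtain ⟨q0, hq0mem, hq0⟩ := hB
      set S := (Finset.Icc 1 k).filter (fun i => c i ≠ 0) with hS
      set T := (Finset.Icc 1 (r - k)).filter (fun j => ctilde j ≠ 0) with hT
      have hSne : S.Nonempty := ⟨p0, Finset.mem_filter.mpr ⟨hp0mem, hp0⟩⟩
      have hTne : T.Nonempty := ⟨q0, Finset.mem_filter.mpr ⟨hq0mem, hq0⟩⟩
      set p := S.max' hSne with hp
      set q := T.max' hTne with hq
      obtain ⟨hpmem, hpne⟩ := Finset.mem_filter.mp (S.max'_mem hSne)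
      obtain ⟨hqmem, hqne⟩ := Finset.mem_filter.mp (T.max'_mem hTne)
      obtain ⟨hp1, hpk⟩ := Finset.mem_Icc.mp hpmem
      obtain ⟨hq1, hqk⟩ := Finset.mem_Icc.mp hqmem
      have hcmax : ∀ i, p < i → i ≤ k → c i = 0 := by
        intro i hpi hik
        by_contra hne
        have hmem : i ∈ S := Finset.mem_filter.mpr
          ⟨Finset.mem_Icc.mpr ⟨by omega, hik⟩, hne⟩
        exact absurd (S.le_max' i hmem) (by omega)
      have hctmax : ∀ j, q < j → j ≤ r - k → ctilde j = 0 := by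
        intro j hqj hjk
        by_contra hne
        have hmem : j ∈ T := Finset.mem_filter.mpr
          ⟨Finset.mem_Icc.mpr ⟨by omega, hjk⟩, hne⟩
        exact absurd (T.le_max' j hmem) (by omega)
      have hk' := key (p + q) (by omega)
      have h1 : (if p + q ≤ k then c (p + q) else 0) = 0 := by
        split
        next h => exact hcmax _ (by omega) h
        next => rfl
      have h2 : (if p + q ≤ r - k then ctilde (p + q) else 0) = 0 := by
        split
        next h => exact hctmax _ (by omega) h
        next => rfl
      have h3 : ∑ i ∈ Finset.Icc 1 k, ∑ j ∈ Finset.Icc 1 (r - k),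
          (if i + j = p + q then c i * ctilde j else 0) = c p * ctilde q := by
        rw [Finset.sum_eq_single_of_mem p hpmem]
        · rw [Finset.sum_eq_single_of_mem q hqmem]
          · rw [if_pos rfl]
          · intro j hj hjq
            split
            next hij => exact absurd (by omega : j = q) hjq
            next => rfl
        · intro i hi hip
          refine Finset.sum_eq_zero fun j hj => ?_
          obtain ⟨hi1, hik⟩ := Finset.mem_Icc.mp hi
          obtain ⟨hj1, hjk⟩ := Finset.mem_Icc.mp hj
          split
          next hij =>
            rcases lt_or_gt_of_ne hip with hlt | hgt
            · rw [hctmax j (by omega) hjk, mul_zero]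
            · rw [hcmax i hgt hik, zero_mul]
          next => rfl
      rw [h1, h2, h3, zero_add, zero_add] at hk'
      rcases hgood p q _ _ (hc p) (hct q) (by omega) hk' with h | h
      · exact hpne h
      · exact hqne h
  refine ⟨hA, fun j hj => ?_⟩
  obtain ⟨hj1, hjk⟩ := Finset.mem_Icc.mp hj
  have hk' := key j hj1
  have h1 : (if j ≤ k then c j else 0) = 0 := by
    split
    next h => exact hA j (Finset.mem_Icc.mpr ⟨hj1, h⟩)
    next => rfl
  have h3 : ∑ i ∈ Finset.Icc 1 k, ∑ j' ∈ Finset.Icc 1 (r - k),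
      (if i + j' = j then c i * ctilde j' else 0) = 0 := by
    refine Finset.sum_eq_zero fun i hi => Finset.sum_eq_zero fun j' _ => ?_
    rw [hA i hi, zero_mul, ite_self]
  rw [h1, h3, zero_add, add_zero, if_pos hjk] at hk'
  exact hk'
end

section
/- Let A be a commutative graded ring with all graded pieces free ℤ-modules, having good divisibility up to degree r, and let n ≥ 1. Let f = u^n + e_1 u^{n-1} + ⋯ + e_n ∈ A[u] be a monic polynomial with e_i ∈ A_i (homogeneous of degree i), and set R = A[u]/(f), graded with deg u = 1. Then R has good divisibility up to degree min(r, n − 1). -/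
/-- Good divisibility up to degree `r` for a ring graded by `𝒜 : ℕ → Submodule ℤ A`. -/
def GoodDivisibility {A : Type*} [CommRing A] (𝒜 : ℕ → Submodule ℤ A) (r : ℕ) : Prop :=
  ∀ (i j : ℕ) (x y : A), x ∈ 𝒜 i → y ∈ 𝒜 j → i + j ≤ r → x * y = 0 → x = 0 ∨ y = 0

/-- An element of `R = A[u]/(f)` is homogeneous of degree `k` (with `deg u = 1`) if it
is the class of a polynomial `∑ p_d u^d` with `p_d ∈ A_{k-d}` for `d ≤ k` and
`p_d = 0` for `d > k`. -/
def QuotHomogeneous {A : Type*} [CommRing A] (𝒜 : ℕ → Submodule ℤ A)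
    (f : Polynomial A) (x : Polynomial A ⧸ Ideal.span {f}) (k : ℕ) : Prop :=
  ∃ p : Polynomial A, (∀ d ≤ k, p.coeff d ∈ 𝒜 (k - d)) ∧ (∀ d, k < d → p.coeff d = 0) ∧
    Ideal.Quotient.mk (Ideal.span {f}) p = x

/-- Let `A` be a commutative graded ring with free ℤ-module graded pieces
and good divisibility up to degree `r`, let `n ≥ 1`, and let
`f = u^n + e_1 u^{n-1} + ⋯ + e_n` be monic with `e_i ∈ A_i`. Then `R = A[u]/(f)`,
graded with `deg u = 1`, has good divisibility up to degree `min r (n - 1)`. -/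
theorem stmt_9 {A : Type} [CommRing A] (𝒜 : ℕ → Submodule ℤ A) [GradedRing 𝒜]
    (hfree : ∀ i, Module.Free ℤ (𝒜 i))
    (r : ℕ) (hA : GoodDivisibility 𝒜 r)
    (n : ℕ) (hn : 1 ≤ n) (e : ℕ → A) (he : ∀ i, e i ∈ 𝒜 i)
    (f : Polynomial A)
    (hf : f = Polynomial.X ^ n +
      ∑ i ∈ Finset.range n, Polynomial.C (e (n - i)) * Polynomial.X ^ i) :
    ∀ (i j : ℕ) (x y : Polynomial A ⧸ Ideal.span {f}),
      QuotHomogeneous 𝒜 f x i → QuotHomogeneous 𝒜 f y j →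
      i + j ≤ min r (n - 1) → x * y = 0 → x = 0 ∨ y = 0 := by
  intro i j x y hx hy hij hxy
  rcases subsingleton_or_nontrivial A with hA0 | hA0
  · left
    haveI : Subsingleton (Polynomial A) := inferInstance
    haveI : Subsingleton (Polynomial A ⧸ Ideal.span {f}) :=
      Quotient.instSubsingletonQuotient _
    exact Subsingleton.elim x 0
  obtain ⟨p, hp1, hp2, hp3⟩ := hx
  obtain ⟨q, hq1, hq2, hq3⟩ := hy
  -- f is monic of degree n
  have hfm : f.Monic := by
    rw [hf]
    apply Polynomial.monic_X_pow_add
    refine lt_of_le_of_lt (Polynomial.degree_sum_le _ _) ?_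
    rw [Finset.sup_lt_iff (by exact_mod_cast WithBot.bot_lt_coe n)]
    intro b hb
    refine lt_of_le_of_lt (Polynomial.degree_C_mul_X_pow_le _ _) ?_
    exact_mod_cast Finset.mem_range.mp hb
  have hfdeg : f.natDegree = n := by
    have h1 : (∑ i ∈ Finset.range n, Polynomial.C (e (n - i)) * Polynomial.X ^ i).degree <
        (Polynomial.X ^ n : Polynomial A).degree := by
      rw [Polynomial.degree_X_pow]
      refine lt_of_le_of_lt (Polynomial.degree_sum_le _ _) ?_
      rw [Finset.sup_lt_iff (by exact_mod_cast WithBot.bot_lt_coe n)]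
      intro b hb
      refine lt_of_le_of_lt (Polynomial.degree_C_mul_X_pow_le _ _) ?_
      exact_mod_cast Finset.mem_range.mp hb
    have : f.degree = n := by
      rw [hf, Polynomial.degree_add_eq_left_of_degree_lt h1, Polynomial.degree_X_pow]
    exact Polynomial.natDegree_eq_of_degree_eq_some this
  -- natDegree bounds
  have hdp : p.natDegree ≤ i := Polynomial.natDegree_le_iff_coeff_eq_zero.mpr hp2
  have hdq : q.natDegree ≤ j := Polynomial.natDegree_le_iff_coeff_eq_zero.mpr hq2
  -- p * q maps to 0, so f ∣ p * q
  have hdvd : f ∣ p * q := by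
    rw [← Ideal.mem_span_singleton]
    have : Ideal.Quotient.mk (Ideal.span {f}) (p * q) = 0 := by
      rw [map_mul, hp3, hq3, hxy]
    exact (Ideal.Quotient.eq_zero_iff_mem).mp this
  -- p * q has small degree, so p * q = 0
  have hpq0 : p * q = 0 := by
    by_contra h
    obtain ⟨g, hg⟩ := hdvd
    have hg0 : g ≠ 0 := by rintro rfl; simp [hg] at h
    have : n ≤ (p * q).natDegree := by
      rw [hg, hfm.natDegree_mul' hg0, hfdeg]
      exact Nat.le_add_right n g.natDegree
    have h2 : (p * q).natDegree ≤ i + j :=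
      le_trans (Polynomial.natDegree_mul_le) (add_le_add hdp hdq)
    have h3 : i + j ≤ n - 1 := le_trans hij (min_le_right _ _)
    omega
  -- leading coefficients
  have hlc : p.leadingCoeff * q.leadingCoeff = 0 := by
    have := Polynomial.coeff_mul_degree_add_degree p q
    rw [hpq0] at this
    simpa using this.symm
  have hplc : p.leadingCoeff ∈ 𝒜 (i - p.natDegree) := hp1 _ hdp
  have hqlc : q.leadingCoeff ∈ 𝒜 (j - q.natDegree) := hq1 _ hdq
  have hsum : (i - p.natDegree) + (j - q.natDegree) ≤ r :=
    le_trans (by omega) (le_trans hij (min_le_left _ _))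
  rcases hA _ _ _ _ hplc hqlc hsum hlc with h | h
  · left
    rw [← hp3, Polynomial.leadingCoeff_eq_zero.mp h, map_zero]
  · right
    rw [← hq3, Polynomial.leadingCoeff_eq_zero.mp h, map_zero]
end

section
/- Let k and l be natural numbers and consider the graded ring R = ℤ[x, y]/(x^{k+1}, y^{l+1}) with deg x = deg y = 1 (the Chow ring of ℙ^k × ℙ^l). Then R has good divisibility up to degree min(k, l): if P ∈ R_i, Q ∈ R_j with i + j ≤ min(k, l) and P·Q = 0, then P = 0 or Q = 0. -/
noncomputable section

open MvPolynomial

/-- The defining ideal `(x^{k+1}, y^{l+1})` of the Chow ring of `ℙ^k × ℙ^l`,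
where `x = X 0` and `y = X 1`. -/
def prodProjIdeal (k l : ℕ) : Ideal (MvPolynomial (Fin 2) ℤ) :=
  Ideal.span {X 0 ^ (k + 1), X 1 ^ (l + 1)}

/-- The Chow ring `ℤ[x,y]/(x^{k+1}, y^{l+1})` of `ℙ^k × ℙ^l`, with `deg x = deg y = 1`. -/
abbrev ProdProjRing (k l : ℕ) : Type := MvPolynomial (Fin 2) ℤ ⧸ prodProjIdeal k l

/-- An element of `ProdProjRing k l` is homogeneous of degree `i` if it is the class of
a homogeneous polynomial of degree `i`. -/
def ProdProjRing.IsHomogeneous (k l : ℕ) (x : ProdProjRing k l) (i : ℕ) : Prop :=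
  ∃ P : MvPolynomial (Fin 2) ℤ, P.IsHomogeneous i ∧
    Ideal.Quotient.mk (prodProjIdeal k l) P = x

/-- A homogeneous polynomial of degree `d ≤ min k l` lying in `prodProjIdeal k l` is zero:
every monomial of `A·x^{k+1} + B·y^{l+1}` has `x`-exponent `≥ k+1` or `y`-exponent `≥ l+1`,
while a degree-`d` monomial has all exponents `≤ d ≤ min k l`. -/
lemma prodProjIdeal_homogeneous_eq_zero (k l d : ℕ) (R : MvPolynomial (Fin 2) ℤ)
    (hR : R.IsHomogeneous d) (hd : d ≤ min k l) (hmem : R ∈ prodProjIdeal k l) : R = 0 := by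
  rw [prodProjIdeal, Ideal.mem_span_pair] at hmem
  obtain ⟨A, B, hAB⟩ := hmem
  ext m
  rw [coeff_zero]
  by_cases hm : m.degree = d
  · have h0 : m 0 ≤ d := hm ▸ Finsupp.le_degree 0 m
    have h1 : m 1 ≤ d := hm ▸ Finsupp.le_degree 1 m
    rw [← hAB]
    rw [coeff_add, X_pow_eq_monomial, X_pow_eq_monomial, coeff_mul_monomial',
      coeff_mul_monomial', if_neg, if_neg, add_zero]
    · rw [Finsupp.single_le_iff]; omega
    · rw [Finsupp.single_le_iff]; omega
  · exact hR.coeff_eq_zero hm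

/-- The graded ring `R = ℤ[x,y]/(x^{k+1}, y^{l+1})` (the Chow ring of
`ℙ^k × ℙ^l`) has good divisibility up to degree `min k l`: if `P ∈ R_i`, `Q ∈ R_j`,
`i + j ≤ min k l` and `P * Q = 0`, then `P = 0` or `Q = 0`. -/
theorem stmt_10 (k l : ℕ) (i j : ℕ) (P Q : ProdProjRing k l)
    (hP : ProdProjRing.IsHomogeneous k l P i) (hQ : ProdProjRing.IsHomogeneous k l Q j)
    (hij : i + j ≤ min k l) (hPQ : P * Q = 0) : P = 0 ∨ Q = 0 := by
  obtain ⟨p, hp, rfl⟩ := hP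
  obtain ⟨q, hq, rfl⟩ := hQ
  rw [← map_mul, Ideal.Quotient.eq_zero_iff_mem] at hPQ
  have : p * q = 0 := prodProjIdeal_homogeneous_eq_zero k l (i + j) _ (hp.mul hq) hij hPQ
  rcases mul_eq_zero.mp this with h | h
  · left; rw [h, map_zero]
  · right; rw [h, map_zero]

end
end

section
/- In the graded ring R = ℤ[x, y]/(x^{k+1}, y^{l+1}) with deg x = deg y = 1, suppose c_1, …, c_a and d_1, …, d_b are homogeneous elements with c_i ∈ R_i, d_j ∈ R_j, a + b ≤ min(k, l), and (1 + c_1 + ⋯ + c_a)(1 + d_1 + ⋯ + d_b) = 1. Then all c_i = 0 and all d_j = 0. -/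
/-!
Lift the `cᵢ` and `dⱼ` to homogeneous polynomials `Pᵢ`, `Qⱼ` and put `F = 1 + ∑ Pᵢ`,
`G = 1 + ∑ Qⱼ`. Then `F * G - 1` lies in `(x^{k+1}, y^{l+1})` and has degree at most
`a + b ≤ min k l`; since every monomial of that ideal has degree greater than `min k l`, it
vanishes. So `F * G = 1` already in `ℤ[x, y]`, whose units are constants: the components of
positive degree of `F` and `G`, namely the `Pᵢ` and `Qⱼ`, are zero.
-/

noncomputable section

open MvPolynomial

namespace MvPolynomial

variable {σ R : Type*}

theorem eq_zero_of_mem_span_monomial_of_totalDegree_le [CommSemiring R]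
    {p : MvPolynomial σ R} {s : Set (σ →₀ ℕ)} {n : ℕ} (hs : ∀ m ∈ s, n < m.degree)
    (hp : p ∈ Ideal.span ((fun m => monomial m (1 : R)) '' s)) (hdeg : p.totalDegree ≤ n) :
    p = 0 := by
  by_contra hne
  obtain ⟨m, hm⟩ := ne_zero_iff.mp hne
  obtain ⟨g, hgs, hgm⟩ := mem_ideal_span_monomial_image.mp hp m (mem_support_iff.mpr hm)
  have hm_le : m.degree ≤ p.totalDegree := le_totalDegree (mem_support_iff.mpr hm)
  exact (hs g hgs).not_ge ((Finsupp.degree_mono hgm).trans (hm_le.trans hdeg))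

theorem totalDegree_one_add_sum_le [CommSemiring R] {P : ℕ → MvPolynomial σ R} {s : Finset ℕ}
    {n : ℕ} (hP : ∀ i ∈ s, (P i).IsHomogeneous i) (hn : ∀ i ∈ s, i ≤ n) :
    (1 + ∑ i ∈ s, P i).totalDegree ≤ n := by
  refine (totalDegree_add _ _).trans (max_le (by simp) ?_)
  exact (totalDegree_finsetSum _ _).trans
    (Finset.sup_le fun i hi => (hP i hi).totalDegree_le.trans (hn i hi))

theorem homogeneousComponent_one_add_sum [CommSemiring R] {P : ℕ → MvPolynomial σ R}
    {s : Finset ℕ} (hP : ∀ i ∈ s, (P i).IsHomogeneous i) {i : ℕ} (hi : i ∈ s) (hi0 : i ≠ 0) :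
    homogeneousComponent i (1 + ∑ j ∈ s, P j) = P i := by
  rw [map_add, homogeneousComponent_of_mem (isHomogeneous_one σ R), if_neg hi0, zero_add,
    map_sum, Finset.sum_congr rfl fun j hj => homogeneousComponent_of_mem (hP j hj),
    Finset.sum_ite_eq, if_pos hi]

theorem eq_zero_of_isUnit_one_add_sum [CommRing R] [IsReduced R] {P : ℕ → MvPolynomial σ R}
    {s : Finset ℕ} (hs : 0 ∉ s) (hP : ∀ i ∈ s, (P i).IsHomogeneous i)
    (hu : IsUnit (1 + ∑ i ∈ s, P i)) : ∀ i ∈ s, P i = 0 := by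
  intro i hi
  have hi0 : i ≠ 0 := ne_of_mem_of_not_mem hi hs
  rw [← homogeneousComponent_one_add_sum hP hi hi0]
  exact homogeneousComponent_eq_zero _ _
    (((isUnit_iff_totalDegree_of_isReduced.mp hu).2).trans_lt (Nat.pos_of_ne_zero hi0))

end MvPolynomial

theorem prodProjIdeal_eq_span_monomial (k l : ℕ) :
    prodProjIdeal k l = Ideal.span ((fun m => monomial m (1 : ℤ)) ''
      {Finsupp.single 0 (k + 1), Finsupp.single 1 (l + 1)}) := by
  simp [prodProjIdeal, Set.image_pair, X_pow_eq_monomial]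

theorem eq_zero_of_mem_prodProjIdeal_of_totalDegree_le {k l : ℕ} {p : MvPolynomial (Fin 2) ℤ}
    (hp : p ∈ prodProjIdeal k l) (hdeg : p.totalDegree ≤ min k l) : p = 0 := by
  rw [prodProjIdeal_eq_span_monomial] at hp
  refine eq_zero_of_mem_span_monomial_of_totalDegree_le ?_ hp hdeg
  simp only [Set.mem_insert_iff, Set.mem_singleton_iff]
  rintro m (rfl | rfl) <;> simp only [Finsupp.degree_single] <;> omega

/-- In `R = ℤ[x,y]/(x^{k+1}, y^{l+1})`, if `c_i ∈ R_i` (`1 ≤ i ≤ a`),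
`d_j ∈ R_j` (`1 ≤ j ≤ b`), `a + b ≤ min k l`, and the Whitney-type relation
`(1 + c_1 + ⋯ + c_a)(1 + d_1 + ⋯ + d_b) = 1` holds, then all `c_i = 0` and all
`d_j = 0`. -/
theorem stmt_17 (k l : ℕ) (a b : ℕ) (hab : a + b ≤ min k l)
    (c d : ℕ → ProdProjRing k l)
    (hc : ∀ i, ProdProjRing.IsHomogeneous k l (c i) i)
    (hd : ∀ j, ProdProjRing.IsHomogeneous k l (d j) j)
    (hWhitney :
      (1 + ∑ i ∈ Finset.Icc 1 a, c i) * (1 + ∑ j ∈ Finset.Icc 1 b, d j) = 1) :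
    (∀ i ∈ Finset.Icc 1 a, c i = 0) ∧ (∀ j ∈ Finset.Icc 1 b, d j = 0) := by
  choose P hP hPc using hc
  choose Q hQ hQd using hd
  set F := 1 + ∑ i ∈ Finset.Icc 1 a, P i
  set G := 1 + ∑ j ∈ Finset.Icc 1 b, Q j
  have hFG : F * G = 1 := by
    have hmem : F * G - 1 ∈ prodProjIdeal k l := by
      rw [← Ideal.Quotient.eq_zero_iff_mem, map_sub, sub_eq_zero]
      simpa [F, G, map_sum, hPc, hQd] using hWhitney
    refine sub_eq_zero.mp (eq_zero_of_mem_prodProjIdeal_of_totalDegree_le hmem ?_)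
    have hF : F.totalDegree ≤ a :=
      totalDegree_one_add_sum_le (fun i _ => hP i) (fun i hi => (Finset.mem_Icc.mp hi).2)
    have hG : G.totalDegree ≤ b :=
      totalDegree_one_add_sum_le (fun j _ => hQ j) (fun j hj => (Finset.mem_Icc.mp hj).2)
    refine (totalDegree_sub _ _).trans (max_le ?_ (by simp))
    exact (totalDegree_mul F G).trans ((add_le_add hF hG).trans hab)
  have h0 (n : ℕ) : 0 ∉ Finset.Icc 1 n := by simp
  refine ⟨fun i hi => ?_, fun j hj => ?_⟩
  · rw [← hPc i, eq_zero_of_isUnit_one_add_sum (h0 a) (fun i _ => hP i)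
      (.of_mul_eq_one G hFG) i hi, map_zero]
  · rw [← hQd j, eq_zero_of_isUnit_one_add_sum (h0 b) (fun j _ => hQ j)
      (.of_mul_eq_one_right F hFG) j hj, map_zero]

end
end
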